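/- Under the model of the M_L mechanism for two disjoint groups G (size n) and Ḡ (size n̄), the group-mean estimators m̂_G^L and m̂_Ḡ^L are uncorrelated: Cov(m̂_G^L, m̂_Ḡ^L) = 0, and hence Var[m̂_G^L - m̂_Ḡ^L] = Var[m̂_G^L] + Var[m̂_Ḡ^L]. -/

import Mathlib

open MeasureTheory ProbabilityTheory

lemma iIndepFun_congr_ae' {Ω ι : Type*} [MeasurableSpace Ω] {μ : Measure Ω}
    {f g : ι → Ω → ℝ} (h : iIndepFun f μ)
    (hfg : ∀ i, f i =ᵐ[μ] g i) : iIndepFun g μ := by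
  rw [iIndepFun_iff_measure_inter_preimage_eq_mul] at h ⊢
  intro S sets hmeas
  have h1 : ∀ i : ι, (f i ⁻¹' sets i : Set Ω) =ᵐ[μ] (g i ⁻¹' sets i) := by
    intro i
    rw [Filter.eventuallyEq_set]
    filter_upwards [hfg i] with ω hω
    simp [Set.mem_preimage, hω]
  have h2 : (⋂ i ∈ S, f i ⁻¹' sets i : Set Ω) =ᵐ[μ] (⋂ i ∈ S, g i ⁻¹' sets i) := by
    rw [Filter.eventuallyEq_set]
    have hall : ∀ᵐ ω ∂μ, ∀ i ∈ S, f i ω = g i ω :=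
      (Filter.eventually_all_finset S).2 fun i _ => hfg i
    filter_upwards [hall] with ω hω
    simp only [Set.mem_iInter, Set.mem_preimage]
    exact forall₂_congr fun i hi => by rw [hω i hi]
  rw [← measure_congr h2, h S hmeas]
  exact Finset.prod_congr rfl fun i _ => measure_congr (h1 i)

/-- Under the `M_L` model for two disjoint groups `G` (size `n`) and `Ḡ` (size `n̄`),
the group-mean estimators are uncorrelated, and hence the variance of their
difference is the sum of their variances. -/
theorem mL_estimators_uncorrelated
    {Ω : Type*} [MeasureSpace Ω] [IsProbabilityMeasure (ℙ : Measure Ω)]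
    (n nb : ℕ) (hn : 1 ≤ n) (hnb : 1 ≤ nb)
    (a : ℝ) (ha : a ∈ Set.Ioc (0 : ℝ) 1)
    (v : Fin n → ℝ) (hv : ∀ i, v i ∈ Set.Icc (-1 : ℝ) 1)
    (w : Fin nb → ℝ) (hw : ∀ j, w j ∈ Set.Icc (-1 : ℝ) 1)
    -- group-G clients: keep indicator B, kept-noise Y, flipped-noise Ȳ
    (B Y Yb : Fin n → Ω → ℝ)
    -- group-Ḡ clients: keep indicator C, kept-noise Z, flipped-noise Z̄
    (C Z Zb : Fin nb → Ω → ℝ)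
    (hBval : ∀ i ω, B i ω = 0 ∨ B i ω = 1) (hBm : ∀ i, MemLp (B i) 2 ℙ)
    (hEB : ∀ i, ∫ ω, B i ω = a)
    (hCval : ∀ j ω, C j ω = 0 ∨ C j ω = 1) (hCm : ∀ j, MemLp (C j) 2 ℙ)
    (hEC : ∀ j, ∫ ω, C j ω = a)
    (hYm : ∀ i, MemLp (Y i) 2 ℙ) (hEY : ∀ i, ∫ ω, Y i ω = 0)
    (hYbm : ∀ i, MemLp (Yb i) 2 ℙ) (hEYb : ∀ i, ∫ ω, Yb i ω = 0)
    (hZm : ∀ j, MemLp (Z j) 2 ℙ) (hEZ : ∀ j, ∫ ω, Z j ω = 0)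
    (hZbm : ∀ j, MemLp (Zb j) 2 ℙ) (hEZb : ∀ j, ∫ ω, Zb j ω = 0)
    -- mutual independence of all the variables
    (hindep : iIndepFun
      (Sum.elim B (Sum.elim Y (Sum.elim Yb (Sum.elim C (Sum.elim Z Zb)))) :
        (Fin n ⊕ (Fin n ⊕ (Fin n ⊕ (Fin nb ⊕ (Fin nb ⊕ Fin nb))))) → Ω → ℝ) ℙ)
    -- the two group-mean estimators
    (mG mGb : Ω → ℝ)
    (hmG : ∀ ω, mG ω = (1 / (a * n))
      * (∑ i, B i ω * (v i + Y i ω) + ∑ j, (1 - C j ω) * Zb j ω))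
    (hmGb : ∀ ω, mGb ω = (1 / (a * nb))
      * (∑ j, C j ω * (w j + Z j ω) + ∑ i, (1 - B i ω) * Yb i ω)) :
    (∫ ω, (mG ω - ∫ ω', mG ω') * (mGb ω - ∫ ω', mGb ω')) = 0 ∧
      variance (fun ω => mG ω - mGb ω) ℙ = variance mG ℙ + variance mGb ℙ := by
  classical
  have h12 : (1 : ENNReal)/1 = 1/2 + 1/2 := by rw [ENNReal.add_halves]; exact div_one 1
  set F : (Fin n ⊕ (Fin n ⊕ (Fin n ⊕ (Fin nb ⊕ (Fin nb ⊕ Fin nb))))) → Ω → ℝ :=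
    Sum.elim B (Sum.elim Y (Sum.elim Yb (Sum.elim C (Sum.elim Z Zb)))) with hFdef
  have hF2 : ∀ k, MemLp (F k) 2 ℙ := by
    rintro (i | i | i | j | j | j)
    exacts [hBm i, hYm i, hYbm i, hCm j, hZm j, hZbm j]
  set F' : (Fin n ⊕ (Fin n ⊕ (Fin n ⊕ (Fin nb ⊕ (Fin nb ⊕ Fin nb))))) → Ω → ℝ :=
    fun k => (hF2 k).1.mk (F k) with hF'def
  have hFae : ∀ k, F k =ᵐ[ℙ] F' k := fun k => (hF2 k).1.ae_eq_mk
  have hF'meas : ∀ k, Measurable (F' k) := fun k => (hF2 k).1.stronglyMeasurable_mk.measurable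
  have hindep' : iIndepFun F' ℙ := iIndepFun_congr_ae' hindep hFae
  have hpair : ∀ k1 k2 k3 k4, k1 ≠ k3 → k1 ≠ k4 → k2 ≠ k3 → k2 ≠ k4 →
      IndepFun (fun ω => (F k1 ω, F k2 ω)) (fun ω => (F k3 ω, F k4 ω)) ℙ := by
    intro k1 k2 k3 k4 h13 h14 h23 h24
    have h := hindep'.indepFun_prodMk_prodMk hF'meas k1 k2 k3 k4 h13 h14 h23 h24
    exact h.congr (by filter_upwards [hFae k1, hFae k2] with ω h1 h2; rw [h1, h2])
      (by filter_upwards [hFae k3, hFae k4] with ω h3 h4; rw [h3, h4])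
  have hkey : ∀ k1 k2 k3 k4, k1 ≠ k3 → k1 ≠ k4 → k2 ≠ k3 → k2 ≠ k4 →
      ∀ (φ ψ : ℝ × ℝ → ℝ), Measurable φ → Measurable ψ →
      ∫ ω, φ (F k1 ω, F k2 ω) * ψ (F k3 ω, F k4 ω)
        = (∫ ω, φ (F k1 ω, F k2 ω)) * ∫ ω, ψ (F k3 ω, F k4 ω) := by
    intro k1 k2 k3 k4 h13 h14 h23 h24 φ ψ hφ hψ
    have h := ((hpair k1 k2 k3 k4 h13 h14 h23 h24).comp hφ hψ).integral_mul_eq_mul_integral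
      (hφ.comp_aemeasurable (((hF2 k1).1.aemeasurable).prodMk
        ((hF2 k2).1.aemeasurable))).aestronglyMeasurable
      (hψ.comp_aemeasurable (((hF2 k3).1.aemeasurable).prodMk
        ((hF2 k4).1.aemeasurable))).aestronglyMeasurable
    simpa [Function.comp] using h
  -- the summands of the two estimators
  set U : (Fin n ⊕ Fin nb) → Ω → ℝ :=
    Sum.elim (fun i ω => B i ω * (v i + Y i ω)) (fun j ω => (1 - C j ω) * Zb j ω) with hUdef
  set V : (Fin nb ⊕ Fin n) → Ω → ℝ :=
    Sum.elim (fun j ω => C j ω * (w j + Z j ω)) (fun i ω => (1 - B i ω) * Yb i ω) with hVdef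
  have hU2 : ∀ k, MemLp (U k) 2 ℙ := by
    rintro (i | j)
    · refine MemLp.of_le ((memLp_const (v i)).add (hYm i))
        ((hBm i).1.mul (aestronglyMeasurable_const.add (hYm i).1))
        (Filter.Eventually.of_forall fun ω => ?_)
      have hb : |B i ω| ≤ 1 := by rcases hBval i ω with h | h <;> simp [h]
      simp only [hUdef, Sum.elim_inl, Pi.add_apply, Real.norm_eq_abs, abs_mul]
      exact mul_le_of_le_one_left (abs_nonneg _) hb
    · refine MemLp.of_le (hZbm j)
        ((aestronglyMeasurable_const.sub (hCm j).1).mul (hZbm j).1)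
        (Filter.Eventually.of_forall fun ω => ?_)
      have hc : |1 - C j ω| ≤ 1 := by rcases hCval j ω with h | h <;> simp [h]
      simp only [hUdef, Sum.elim_inr, Real.norm_eq_abs, abs_mul]
      exact mul_le_of_le_one_left (abs_nonneg _) hc
  have hV2 : ∀ l, MemLp (V l) 2 ℙ := by
    rintro (j | i)
    · refine MemLp.of_le ((memLp_const (w j)).add (hZm j))
        ((hCm j).1.mul (aestronglyMeasurable_const.add (hZm j).1))
        (Filter.Eventually.of_forall fun ω => ?_)
      have hc : |C j ω| ≤ 1 := by rcases hCval j ω with h | h <;> simp [h]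
      simp only [hVdef, Sum.elim_inl, Pi.add_apply, Real.norm_eq_abs, abs_mul]
      exact mul_le_of_le_one_left (abs_nonneg _) hc
    · refine MemLp.of_le (hYbm i)
        ((aestronglyMeasurable_const.sub (hBm i).1).mul (hYbm i).1)
        (Filter.Eventually.of_forall fun ω => ?_)
      have hb : |1 - B i ω| ≤ 1 := by rcases hBval i ω with h | h <;> simp [h]
      simp only [hVdef, Sum.elim_inr, Real.norm_eq_abs, abs_mul]
      exact mul_le_of_le_one_left (abs_nonneg _) hb
  have hUi : ∀ k, Integrable (U k) ℙ := fun k => (hU2 k).integrable one_le_two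
  have hVi : ∀ l, Integrable (V l) ℙ := fun l => (hV2 l).integrable one_le_two
  have hUVint : ∀ k l, Integrable (fun ω => U k ω * V l ω) ℙ := by
    intro k l
    have := memLp_one_iff_integrable.1 ((hV2 l).smul (hU2 k) (r := 1))
    exact this
  -- the per-pair product rule
  have hUV : ∀ k l, ∫ ω, U k ω * V l ω = (∫ ω, U k ω) * ∫ ω, V l ω := by
    rintro (i | j) (j' | i')
    · exact hkey (Sum.inl i) (Sum.inr (Sum.inl i))
        (Sum.inr (Sum.inr (Sum.inr (Sum.inl j')))) (Sum.inr (Sum.inr (Sum.inr (Sum.inr (Sum.inl j')))))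
        (by simp) (by simp) (by simp) (by simp)
        (fun p => p.1 * (v i + p.2)) (fun p => p.1 * (w j' + p.2)) (by fun_prop) (by fun_prop)
    · by_cases hii : i = i'
      · subst hii
        have hL : ∀ ω, U (Sum.inl i) ω * V (Sum.inr i) ω = 0 := by
          intro ω
          simp only [hUdef, hVdef, Sum.elim_inl, Sum.elim_inr]
          rcases hBval i ω with h | h <;> rw [h] <;> ring
        have hVz : ∫ ω, V (Sum.inr i) ω = 0 := by
          have hind : IndepFun (fun ω => 1 - B i ω) (Yb i) ℙ := by
            have h := hindep.indepFun
              (show (Sum.inl i : Fin n ⊕ (Fin n ⊕ (Fin n ⊕ (Fin nb ⊕ (Fin nb ⊕ Fin nb)))))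
                ≠ Sum.inr (Sum.inr (Sum.inl i)) by simp)
            exact h.comp (show Measurable (fun x : ℝ => 1 - x) by fun_prop) measurable_id
          have h := hind.integral_mul_eq_mul_integral (aestronglyMeasurable_const.sub (hBm i).1) (hYbm i).1
          simpa [hVdef, hEYb i] using h
        calc ∫ ω, U (Sum.inl i) ω * V (Sum.inr i) ω = ∫ (_ : Ω), (0:ℝ) := by simp only [hL]
          _ = 0 := integral_zero _ _
          _ = (∫ ω, U (Sum.inl i) ω) * ∫ ω, V (Sum.inr i) ω := by rw [hVz, mul_zero]
      · exact hkey (Sum.inl i) (Sum.inr (Sum.inl i)) (Sum.inl i') (Sum.inr (Sum.inr (Sum.inl i')))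
          (by simp [hii]) (by simp) (by simp) (by simp)
          (fun p => p.1 * (v i + p.2)) (fun p => (1 - p.1) * p.2) (by fun_prop) (by fun_prop)
    · by_cases hjj : j = j'
      · subst hjj
        have hL : ∀ ω, U (Sum.inr j) ω * V (Sum.inl j) ω = 0 := by
          intro ω
          simp only [hUdef, hVdef, Sum.elim_inl, Sum.elim_inr]
          rcases hCval j ω with h | h <;> rw [h] <;> ring
        have hUz : ∫ ω, U (Sum.inr j) ω = 0 := by
          have hind : IndepFun (fun ω => 1 - C j ω) (Zb j) ℙ := by
            have h := hindep.indepFun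
              (show (Sum.inr (Sum.inr (Sum.inr (Sum.inl j))) :
                  Fin n ⊕ (Fin n ⊕ (Fin n ⊕ (Fin nb ⊕ (Fin nb ⊕ Fin nb)))))
                ≠ Sum.inr (Sum.inr (Sum.inr (Sum.inr (Sum.inr j)))) by simp)
            exact h.comp (show Measurable (fun x : ℝ => 1 - x) by fun_prop) measurable_id
          have h := hind.integral_mul_eq_mul_integral (aestronglyMeasurable_const.sub (hCm j).1) (hZbm j).1
          simpa [hUdef, hEZb j] using h
        calc ∫ ω, U (Sum.inr j) ω * V (Sum.inl j) ω = ∫ (_ : Ω), (0:ℝ) := by simp only [hL]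
          _ = 0 := integral_zero _ _
          _ = (∫ ω, U (Sum.inr j) ω) * ∫ ω, V (Sum.inl j) ω := by rw [hUz, zero_mul]
      · exact hkey (Sum.inr (Sum.inr (Sum.inr (Sum.inl j))))
          (Sum.inr (Sum.inr (Sum.inr (Sum.inr (Sum.inr j)))))
          (Sum.inr (Sum.inr (Sum.inr (Sum.inl j')))) (Sum.inr (Sum.inr (Sum.inr (Sum.inr (Sum.inl j')))))
          (by simp [hjj]) (by simp) (by simp) (by simp)
          (fun p => (1 - p.1) * p.2) (fun p => p.1 * (w j' + p.2)) (by fun_prop) (by fun_prop)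
    · exact hkey (Sum.inr (Sum.inr (Sum.inr (Sum.inl j))))
        (Sum.inr (Sum.inr (Sum.inr (Sum.inr (Sum.inr j)))))
        (Sum.inl i') (Sum.inr (Sum.inr (Sum.inl i')))
        (by simp) (by simp) (by simp) (by simp)
        (fun p => (1 - p.1) * p.2) (fun p => (1 - p.1) * p.2) (by fun_prop) (by fun_prop)
  -- rewrite the estimators as constants times sums
  have hmGeq : ∀ ω, mG ω = (1 / (a * n)) * ∑ k, U k ω := by
    intro ω
    rw [hmG ω, Fintype.sum_sum_type]
    rfl
  have hmGbeq : ∀ ω, mGb ω = (1 / (a * nb)) * ∑ l, V l ω := by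
    intro ω
    rw [hmGb ω, Fintype.sum_sum_type]
    rfl
  have hmG2 : MemLp mG 2 ℙ :=
    ((memLp_finset_sum Finset.univ (fun k _ => hU2 k)).const_mul (1 / (a * n))).ae_eq
      (Filter.Eventually.of_forall fun ω => (hmGeq ω).symm)
  have hmGb2 : MemLp mGb 2 ℙ :=
    ((memLp_finset_sum Finset.univ (fun l _ => hV2 l)).const_mul (1 / (a * nb))).ae_eq
      (Filter.Eventually.of_forall fun ω => (hmGbeq ω).symm)
  have hmGint : Integrable mG ℙ := hmG2.integrable one_le_two
  have hmGbint : Integrable mGb ℙ := hmGb2.integrable one_le_two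
  have hPint : Integrable (fun ω => mG ω * mGb ω) ℙ := by
    have := memLp_one_iff_integrable.1 (hmGb2.smul hmG2 (r := 1))
    exact this
  have hEG : ∫ ω, mG ω = (1 / (a * n)) * ∑ k, ∫ ω, U k ω := by
    simp only [hmGeq]
    rw [integral_const_mul, integral_finset_sum _ (fun k _ => hUi k)]
  have hEGb : ∫ ω, mGb ω = (1 / (a * nb)) * ∑ l, ∫ ω, V l ω := by
    simp only [hmGbeq]
    rw [integral_const_mul, integral_finset_sum _ (fun l _ => hVi l)]
  have hP : ∫ ω, mG ω * mGb ω = (∫ ω, mG ω) * ∫ ω, mGb ω := by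
    have hfun : ∀ ω, mG ω * mGb ω
        = (1 / (a * n)) * ((1 / (a * nb)) * ∑ k, ∑ l, U k ω * V l ω) := by
      intro ω
      rw [hmGeq ω, hmGbeq ω, ← Finset.sum_mul_sum]
      ring
    calc ∫ ω, mG ω * mGb ω
        = (1 / (a * n)) * ((1 / (a * nb)) * ∑ k, ∑ l, ∫ ω, U k ω * V l ω) := by
          simp only [hfun]
          rw [integral_const_mul, integral_const_mul,
            integral_finset_sum _ (fun k _ => integrable_finset_sum _ (fun l _ => hUVint k l))]
          congr 1
          congr 1
          exact Finset.sum_congr rfl fun k _ => integral_finset_sum _ (fun l _ => hUVint k l)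
      _ = (1 / (a * n)) * ((1 / (a * nb)) * ∑ k, ∑ l, (∫ ω, U k ω) * ∫ ω, V l ω) := by
          simp only [hUV]
      _ = ((1 / (a * n)) * ∑ k, ∫ ω, U k ω) * ((1 / (a * nb)) * ∑ l, ∫ ω, V l ω) := by
          rw [← Finset.sum_mul_sum]
          ring
      _ = (∫ ω, mG ω) * ∫ ω, mGb ω := by rw [← hEG, ← hEGb]
  constructor
  · have hexp : ∀ ω, (mG ω - ∫ ω', mG ω') * (mGb ω - ∫ ω', mGb ω')
        = mG ω * mGb ω - (∫ ω', mG ω') * mGb ω - (∫ ω', mGb ω') * mG ω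
          + (∫ ω', mG ω') * ∫ ω', mGb ω' := by
      intro ω; ring
    calc (∫ ω, (mG ω - ∫ ω', mG ω') * (mGb ω - ∫ ω', mGb ω'))
        = ∫ ω, (mG ω * mGb ω - (∫ ω', mG ω') * mGb ω - (∫ ω', mGb ω') * mG ω
            + (∫ ω', mG ω') * ∫ ω', mGb ω') := by simp only [hexp]
      _ = (∫ ω, mG ω * mGb ω) - (∫ ω', mG ω') * (∫ ω, mGb ω)
            - (∫ ω', mGb ω') * (∫ ω, mG ω) + (∫ ω', mG ω') * ∫ ω', mGb ω' := by
          have i1 : Integrable (fun ω => mG ω * mGb ω - (∫ ω', mG ω') * mGb ω) ℙ :=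
            hPint.sub (hmGbint.const_mul _)
          have i2 : Integrable
              (fun ω => mG ω * mGb ω - (∫ ω', mG ω') * mGb ω - (∫ ω', mGb ω') * mG ω) ℙ :=
            i1.sub (hmGint.const_mul _)
          rw [integral_add i2 (integrable_const _),
            integral_sub i1 (hmGint.const_mul _),
            integral_sub hPint (hmGbint.const_mul _),
            integral_const_mul, integral_const_mul, integral_const]
          simp
      _ = 0 := by rw [hP]; ring
  · have hsub2 : MemLp (fun ω => mG ω - mGb ω) 2 ℙ := by
      have := hmG2.sub hmGb2
      exact this
    rw [variance_eq_sub hsub2, variance_eq_sub hmG2, variance_eq_sub hmGb2]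
    have hsq : ∫ ω, ((fun ω => mG ω - mGb ω) ^ 2) ω
        = (∫ ω, (mG ^ 2) ω) - 2 * (∫ ω, mG ω * mGb ω) + ∫ ω, (mGb ^ 2) ω := by
      have he : ∀ ω, ((fun ω => mG ω - mGb ω) ^ 2) ω
          = (mG ^ 2) ω - 2 * (mG ω * mGb ω) + (mGb ^ 2) ω := by
        intro ω; simp only [Pi.pow_apply]; ring
      calc ∫ ω, ((fun ω => mG ω - mGb ω) ^ 2) ω
          = ∫ ω, ((mG ^ 2) ω - 2 * (mG ω * mGb ω) + (mGb ^ 2) ω) := by simp only [he]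
        _ = (∫ ω, (mG ^ 2) ω) - 2 * (∫ ω, mG ω * mGb ω) + ∫ ω, (mGb ^ 2) ω := by
            have j0 : Integrable (fun ω => (mG ^ 2) ω) ℙ := hmG2.integrable_sq
            have j2 : Integrable (fun ω => (mGb ^ 2) ω) ℙ := hmGb2.integrable_sq
            have j1 : Integrable (fun ω => (mG ^ 2) ω - 2 * (mG ω * mGb ω)) ℙ :=
              j0.sub (hPint.const_mul 2)
            rw [integral_add j1 j2, integral_sub j0 (hPint.const_mul 2), integral_const_mul]
    have hmean : ∫ ω, (mG ω - mGb ω) = (∫ ω, mG ω) - ∫ ω, mGb ω := integral_sub hmGint hmGbint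
    rw [hsq, hmean, hP]
    ring
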